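/- Let E be an n-dimensional nilpotent evolution algebra with maximal nilindex 2^{n−1}+1. Then every 2-local derivation of E is a derivation (in particular, it is linear). -/

import Mathlib

/-- A derivation of a (non-associative, non-unital) `K`-algebra. -/
def IsDeriv {K E : Type*} [Field K] [NonUnitalNonAssocRing E] [Module K E]
    (d : E →ₗ[K] E) : Prop :=
  ∀ x y : E, d (x * y) = d x * y + x * d y

/-!
The plenary squares `x₀ = e₀`, `x_{m+1} = x_m * x_m` are triangular in the natural basis: if
`x_m` has leading term `e_m`, then `x_m * x_m` has leading term `e_m * e_m = a_{m,m+1} e_{m+1} + ⋯`.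
Hence `x₀, …, x_{n-1}` is a basis of `E`. A derivation killing `e₀` kills every `x_m`, so it is
zero. Thus a derivation is determined by its value at `e₀`, and a 2-local derivation `D` agrees at
every `u` with the derivation `d_{e₀,e₀}`, because `d_{e₀,u}` and `d_{e₀,e₀}` agree at `e₀`.
-/

open Finset Module

section Leading

variable {K E ι : Type*} [Field K] [AddCommGroup E] [Module K E] [LinearOrder ι]

def HasLeadingIndex (e : Basis ι K E) (x : E) (i : ι) : Prop :=
  e.repr x i ≠ 0 ∧ ∀ j < i, e.repr x j = 0

theorem hasLeadingIndex_basis (e : Basis ι K E) (i : ι) : HasLeadingIndex e (e i) i :=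
  ⟨by simp, fun j hj => by simp [hj.ne']⟩

theorem Submodule.basis_mem_of_hasLeadingIndex [Fintype ι] {p : Submodule K E} {e : Basis ι K E}
    {x : E} {i : ι} (hx : HasLeadingIndex e x i) (hxp : x ∈ p) (habove : ∀ j, i < j → e j ∈ p) :
    e i ∈ p := by
  classical
  rw [← e.sum_repr x, ← add_sum_erase _ _ (mem_univ i)] at hxp
  have hrest : ∑ j ∈ univ.erase i, e.repr x j • e j ∈ p := p.sum_mem fun j hj => by
    rcases lt_or_gt_of_ne (ne_of_mem_erase hj) with hlt | hgt
    · rw [hx.2 j hlt, zero_smul]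
      exact p.zero_mem
    · exact p.smul_mem _ (habove j hgt)
  exact (p.smul_mem_iff hx.1).mp ((p.add_mem_iff_left hrest).mp hxp)

theorem Submodule.eq_top_of_forall_hasLeadingIndex [Fintype ι] {p : Submodule K E}
    {e : Basis ι K E} (h : ∀ i, ∃ x ∈ p, HasLeadingIndex e x i) : p = ⊤ := by
  have hbasis : ∀ i, e i ∈ p := fun i => by
    induction i using WellFoundedGT.induction with
    | _ i ih =>
      obtain ⟨x, hxp, hx⟩ := h i
      exact Submodule.basis_mem_of_hasLeadingIndex hx hxp ih
  rw [eq_top_iff, ← e.span_eq, Submodule.span_le]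
  exact Set.range_subset_iff.2 hbasis

end Leading

theorem IsDeriv.sub {K E : Type*} [Field K] [NonUnitalNonAssocRing E] [Module K E]
    {d d' : E →ₗ[K] E} (hd : IsDeriv d) (hd' : IsDeriv d') : IsDeriv (d - d') := by
  intro x y
  simp only [LinearMap.sub_apply, hd x y, hd' x y, sub_mul, mul_sub]
  abel

theorem IsDeriv.iterate_mul_self_eq_zero {K E : Type*} [Field K] [NonUnitalNonAssocRing E]
    [Module K E] {d : E →ₗ[K] E} (hd : IsDeriv d) {x : E} (hx : d x = 0) (m : ℕ) :
    d ((fun y => y * y)^[m] x) = 0 := by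
  induction m with
  | zero => exact hx
  | succ m ih => rw [Function.iterate_succ_apply', hd, ih, zero_mul, mul_zero, add_zero]

def IsNaturalBasis {K E ι : Type*} [Field K] [NonUnitalNonAssocRing E] [Module K E]
    (e : Basis ι K E) : Prop :=
  ∀ i j, i ≠ j → e i * e j = 0

namespace IsNaturalBasis

variable {K E ι : Type*} [Field K] [NonUnitalNonAssocRing E] [Module K E] [Fintype ι]
  {e : Basis ι K E}

theorem mul_basis [IsScalarTower K E E] (he : IsNaturalBasis e) (x : E) (j : ι) :
    x * e j = e.repr x j • (e j * e j) := by
  conv_lhs => rw [← e.sum_repr x]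
  simp_rw [sum_mul, smul_mul_assoc]
  refine sum_eq_single j (fun i _ hij => by rw [he i j hij, smul_zero]) (by simp)

theorem mul_eq_sum [IsScalarTower K E E] [SMulCommClass K E E] (he : IsNaturalBasis e)
    (x y : E) : x * y = ∑ i, (e.repr x i * e.repr y i) • (e i * e i) := by
  conv_lhs => rw [← e.sum_repr y]
  rw [mul_sum]
  refine sum_congr rfl fun i _ => ?_
  rw [mul_smul_comm, he.mul_basis x i, smul_smul, mul_comm]

theorem repr_mul_self [IsScalarTower K E E] [SMulCommClass K E E] (he : IsNaturalBasis e)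
    (x : E) (k : ι) :
    e.repr (x * x) k = ∑ i, e.repr x i * e.repr x i * e.repr (e i * e i) k := by
  simp [he.mul_eq_sum x x]

end IsNaturalBasis

section ChainType

variable {K E : Type*} [Field K] [NonUnitalNonAssocRing E] [Module K E] {n : ℕ}
  {a : Fin n → Fin n → K} {e : Basis (Fin n) K E}

theorem repr_basis_mul_self_of_eq_sum
    (hsq : ∀ i : Fin n, e i * e i = ∑ j ∈ univ.filter (fun j => i < j), a i j • e j)
    (i k : Fin n) : e.repr (e i * e i) k = if i < k then a i k else 0 := by
  simp [hsq i, Finsupp.single_apply]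

variable [IsScalarTower K E E] [SMulCommClass K E E]

theorem HasLeadingIndex.mul_self (he : IsNaturalBasis e)
    (hsq : ∀ i : Fin n, e i * e i = ∑ j ∈ univ.filter (fun j => i < j), a i j • e j)
    (hne : ∀ i : Fin n, ∀ hi : (i : ℕ) + 1 < n, a i ⟨(i : ℕ) + 1, hi⟩ ≠ 0)
    {x : E} {i : Fin n} (hx : HasLeadingIndex e x i) (hi : (i : ℕ) + 1 < n) :
    HasLeadingIndex e (x * x) ⟨i + 1, hi⟩ := by
  -- only the `i`-th summand of `x * x = ∑ j, x_j² e_j²` reaches the coordinates `k ≤ i + 1`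
  have hcoord : ∀ k : Fin n, (k : ℕ) ≤ i + 1 →
      e.repr (x * x) k = e.repr x i * e.repr x i * (if i < k then a i k else 0) := by
    intro k hk
    rw [he.repr_mul_self, sum_eq_single i, repr_basis_mul_self_of_eq_sum hsq]
    · intro j _ hji
      rcases lt_or_gt_of_ne hji with hlt | hgt
      · simp [hx.2 j hlt]
      · rw [repr_basis_mul_self_of_eq_sum hsq, if_neg (by rw [Fin.lt_def] at hgt ⊢; omega),
          mul_zero]
    · simp
  refine ⟨?_, fun k hk => ?_⟩
  · rw [hcoord _ le_rfl, if_pos (Fin.lt_def.2 (Nat.lt_succ_self _))]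
    exact mul_ne_zero (mul_ne_zero hx.1 hx.1) (hne i hi)
  · replace hk : (k : ℕ) < i + 1 := hk
    rw [hcoord k hk.le, if_neg (by rw [Fin.lt_def]; omega), mul_zero]

theorem hasLeadingIndex_iterate_mul_self (he : IsNaturalBasis e)
    (hsq : ∀ i : Fin n, e i * e i = ∑ j ∈ univ.filter (fun j => i < j), a i j • e j)
    (hne : ∀ i : Fin n, ∀ hi : (i : ℕ) + 1 < n, a i ⟨(i : ℕ) + 1, hi⟩ ≠ 0) (m : ℕ) (hm : m < n) :
    HasLeadingIndex e ((fun y => y * y)^[m] (e ⟨0, by omega⟩)) ⟨m, hm⟩ := by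
  induction m with
  | zero => exact hasLeadingIndex_basis e _
  | succ m ih =>
    rw [Function.iterate_succ_apply']
    exact (ih (by omega)).mul_self he hsq hne hm

theorem IsDeriv.eq_of_apply_basis_zero_eq (he : IsNaturalBasis e)
    (hsq : ∀ i : Fin n, e i * e i = ∑ j ∈ univ.filter (fun j => i < j), a i j • e j)
    (hne : ∀ i : Fin n, ∀ hi : (i : ℕ) + 1 < n, a i ⟨(i : ℕ) + 1, hi⟩ ≠ 0)
    {d d' : E →ₗ[K] E} (hd : IsDeriv d) (hd' : IsDeriv d') (h0 : 0 < n)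
    (heq : d (e ⟨0, h0⟩) = d' (e ⟨0, h0⟩)) : d = d' := by
  have hker : LinearMap.ker (d - d') = ⊤ :=
    Submodule.eq_top_of_forall_hasLeadingIndex (e := e) fun i =>
      ⟨_, (hd.sub hd').iterate_mul_self_eq_zero (by simp [heq]) i,
        hasLeadingIndex_iterate_mul_self he hsq hne i i.isLt⟩
  exact sub_eq_zero.mp (LinearMap.ker_eq_top.mp hker)

end ChainType

theorem stmt11_general {K E : Type*} [Field K] [NonUnitalNonAssocRing E]
    [Module K E] [SMulCommClass K E E] [IsScalarTower K E E]
    (n : ℕ) (hn : 2 ≤ n) (a : Fin n → Fin n → K) (e : Module.Basis (Fin n) K E)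
    (hzero : ∀ i j : Fin n, i ≠ j → e i * e j = 0)
    (hsq : ∀ i : Fin n, e i * e i = ∑ j ∈ Finset.univ.filter (fun j => i < j), a i j • e j)
    (hne : ∀ i : Fin n, ∀ hi : (i : ℕ) + 1 < n, a i ⟨(i : ℕ) + 1, hi⟩ ≠ 0)
    (D : E → E)
    (hD : ∀ u v : E, ∃ d : Module.End K E, IsDeriv d ∧ D u = d u ∧ D v = d v) :
    ∃ d : Module.End K E, IsDeriv d ∧ ∀ u : E, D u = d u := by
  have h0 : 0 < n := by omega
  obtain ⟨d, hd, hd0, -⟩ := hD (e ⟨0, h0⟩) (e ⟨0, h0⟩)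
  refine ⟨d, hd, fun u => ?_⟩
  obtain ⟨d', hd', hd'0, hd'u⟩ := hD (e ⟨0, h0⟩) u
  rw [hd'u, hd'.eq_of_apply_basis_zero_eq hzero hsq hne hd h0 (hd'0.symm.trans hd0)]

/-- for an `n`-dimensional nilpotent evolution algebra with maximal
nilindex `2^{n−1}+1`, every 2-local derivation is a derivation (in particular linear). -/
theorem stmt11 {K E : Type*} [Field K] [CharZero K] [NonUnitalNonAssocRing E]
    [Module K E] [SMulCommClass K E E] [IsScalarTower K E E]
    (n : ℕ) (hn : 2 ≤ n) (a : Fin n → Fin n → K) (e : Module.Basis (Fin n) K E)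
    (hzero : ∀ i j : Fin n, i ≠ j → e i * e j = 0)
    (hsq : ∀ i : Fin n, e i * e i = ∑ j ∈ Finset.univ.filter (fun j => i < j), a i j • e j)
    (hne : ∀ i : Fin n, ∀ hi : (i : ℕ) + 1 < n, a i ⟨(i : ℕ) + 1, hi⟩ ≠ 0)
    (D : E → E)
    (hD : ∀ u v : E, ∃ d : Module.End K E, IsDeriv d ∧ D u = d u ∧ D v = d v) :
    ∃ d : Module.End K E, IsDeriv d ∧ ∀ u : E, D u = d u :=
  stmt11_general n hn a e hzero hsq hne D hD
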